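/- arXiv:2202.02356 — 12 statements merged into one kernel-verified Lean document; each statement's English description precedes it below -/
import Mathlib

section
/- Let K be an infinite field, let m, n, t be natural numbers with 1 ≤ t ≤ n, and let χ be an m×n zero-nonzero pattern such that every row of χ has at least t nonzero positions. Then there exists an m×n matrix A with entries in K whose zero-nonzero pattern is χ (i.e., A i j ≠ 0 if and only if χ i j) and whose rank is at most n − t + 1. -/
/-!
Choose distinct points `x₁, …, xₙ` of `K` and let row `i` of `A` be the values at these points of
the polynomial `pᵢ` vanishing exactly at the `xⱼ` with `j` a zero position of row `i`. Each row has
at most `n - t` zeros, so every `pᵢ` lies in the `(n - t + 1)`-dimensional space of polynomials of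
degree at most `n - t`, which bounds the rank of `A`.
-/

open Polynomial Lagrange

theorem Lagrange.eval_nodal_ne_zero_iff {R ι : Type*} [CommRing R] [IsDomain R] {v : ι → R}
    (hv : Function.Injective v) (s : Finset ι) (j : ι) :
    (nodal s v).eval (v j) ≠ 0 ↔ j ∉ s := by
  simp only [eval_nodal, Finset.prod_ne_zero_iff, sub_ne_zero, hv.ne_iff]
  exact ⟨fun h hj => h j hj rfl, fun h i hi hji => h (hji ▸ hi)⟩

/-- The matrix of values `(pᵢ(xⱼ))` factors through the coefficient vectors of the `pᵢ`. -/
theorem Matrix.rank_of_eval_le {K ι κ : Type*} [Field K] [Fintype κ] (p : ι → K[X]) (x : κ → K)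
    {d : ℕ} (hp : ∀ i, (p i).natDegree ≤ d) :
    (Matrix.of fun i j => (p i).eval (x j)).rank ≤ d + 1 := by
  let coeffs : Matrix ι (Fin (d + 1)) K := .of fun i k => (p i).coeff k
  let powers : Matrix (Fin (d + 1)) κ K := .of fun k j => x j ^ (k : ℕ)
  have hfactor : Matrix.of (fun i j => (p i).eval (x j)) = coeffs * powers := by
    ext i j
    rw [Matrix.of_apply, eval_eq_sum_range' (Nat.lt_succ_of_le (hp i)), Matrix.mul_apply,
      ← Fin.sum_univ_eq_sum_range]
    rfl
  calc _ = (coeffs * powers).rank := by rw [hfactor]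
    _ ≤ coeffs.rank := Matrix.rank_mul_le_left coeffs powers
    _ ≤ d + 1 := coeffs.rank_le_card_width.trans_eq (Fintype.card_fin _)

theorem Set.ncard_compl_le_of_le_ncard {n t : ℕ} {s : Set (Fin n)} (hs : t ≤ s.ncard) :
    sᶜ.ncard ≤ n - t := by
  rw [Set.ncard_compl, Nat.card_eq_fintype_card, Fintype.card_fin]
  omega

theorem zero_nonzero_pattern_low_rank_lift_general
    (K : Type*) [Field K] [Infinite K] (m n t : ℕ)
    (χ : Fin m → Fin n → Prop) (hrow : ∀ i, t ≤ {j | χ i j}.ncard) :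
    ∃ A : Matrix (Fin m) (Fin n) K,
      (∀ i j, A i j ≠ 0 ↔ χ i j) ∧ A.rank ≤ n - t + 1 := by
  classical
  let x : Fin n ↪ K := Fin.valEmbedding.trans (Infinite.natEmbedding K)
  let zeros : Fin m → Finset (Fin n) := fun i => {j | χ i j}ᶜ.toFinset
  refine ⟨.of fun i j => (nodal (zeros i) x).eval (x j), fun i j => ?_,
    Matrix.rank_of_eval_le _ _ fun i => ?_⟩
  · simpa [zeros] using eval_nodal_ne_zero_iff x.injective (zeros i) j
  · rw [natDegree_nodal, ← Set.ncard_eq_toFinset_card']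
    exact Set.ncard_compl_le_of_le_ncard (hrow i)

/-- Given an infinite field `K` and an `m × n` zero-nonzero pattern `χ` each of whose rows has
at least `t` nonzero positions (`1 ≤ t ≤ n`), there is a matrix over `K` with zero-nonzero
pattern `χ` and rank at most `n - t + 1`. -/
theorem zero_nonzero_pattern_low_rank_lift
    (K : Type*) [Field K] [Infinite K] (m n t : ℕ) (ht1 : 1 ≤ t) (htn : t ≤ n)
    (χ : Fin m → Fin n → Prop) (hrow : ∀ i, t ≤ {j | χ i j}.ncard) :
    ∃ A : Matrix (Fin m) (Fin n) K,
      (∀ i j, A i j ≠ 0 ↔ χ i j) ∧ A.rank ≤ n - t + 1 :=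
  zero_nonzero_pattern_low_rank_lift_general K m n t χ hrow
end

section
/- Let χ : Fin m → Fin n → ℝ be a full sign pattern, i.e., every entry of χ is 1 or −1, and suppose that every row of χ has at most k sign changes, i.e., for each i the number of indices j with 0 ≤ j < n−1 and χ i j ≠ χ i (j+1) is at most k. Then there exists a matrix A : Matrix (Fin m) (Fin n) ℝ such that A i j has the same sign as χ i j for all i, j (that is, A i j * χ i j > 0), and rank A ≤ k + 1. -/
/-!
A row with sign changes right after positions `r₁, …, r_c` is, at the points `0, 1, …, n - 1`,
the sign pattern of the polynomial `±(r₁ + ½ - X) ⋯ (r_c + ½ - X)` of degree `c ≤ k`. The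
values of `m` polynomials of degree at most `k` at `n` points form a matrix that factors through
the `(k + 1)`-dimensional space of coefficients, so its rank is at most `k + 1`.
-/

open Polynomial Finset

theorem Matrix.rank_of_eval_le_s1 {m n R : Type*} [Fintype n] [CommRing R] [StrongRankCondition R]
    (k : ℕ) (P : m → R[X]) (x : n → R) (hP : ∀ i, (P i).natDegree ≤ k) :
    (Matrix.of fun i j => (P i).eval (x j)).rank ≤ k + 1 := by
  have hfactor : (Matrix.of fun i j => (P i).eval (x j)) =
      Matrix.of (fun i (t : Fin (k + 1)) => (P i).coeff t) *
        Matrix.of (fun (t : Fin (k + 1)) j => x j ^ (t : ℕ)) := by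
    ext i j
    rw [Matrix.of_apply, eval_eq_sum_range' (Nat.lt_succ_of_le (hP i)), Matrix.mul_apply,
      ← Fin.sum_univ_eq_sum_range]
    rfl
  rw [hfactor]
  exact (Matrix.rank_mul_le_right _ _).trans ((Matrix.rank_le_card_height _).trans_eq
    (Fintype.card_fin _))

namespace SignPattern

noncomputable def changes (s : ℕ → ℝ) (N : ℕ) : Finset ℕ :=
  (range N).filter fun r => s r ≠ s (r + 1)

def changePairs {n : ℕ} (v : Fin n → ℝ) : Set (Fin n × Fin n) :=
  {q | (q.2 : ℕ) = (q.1 : ℕ) + 1 ∧ v q.1 ≠ v q.2}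

def extend {n : ℕ} (v : Fin n → ℝ) (j : ℕ) : ℝ :=
  if h : j < n then v ⟨j, h⟩ else 1

noncomputable def poly (s : ℕ → ℝ) (N : ℕ) : ℝ[X] :=
  C (s 0) * ∏ r ∈ changes s N, (C ((r : ℝ) + 1 / 2) - X)

section Sequence

variable {s : ℕ → ℝ}

theorem natDegree_poly_le (N : ℕ) : (poly s N).natDegree ≤ #(changes s N) := by
  have hfactor (a : ℝ) : (C a - X).natDegree ≤ 1 :=
    (natDegree_sub_le _ _).trans (by simp)
  calc (poly s N).natDegree
      ≤ ∑ r ∈ changes s N, (C ((r : ℝ) + 1 / 2) - X).natDegree :=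
        (natDegree_C_mul_le _ _).trans (natDegree_prod_le _ _)
    _ ≤ #(changes s N) * 1 := sum_le_card_nsmul _ _ _ fun r _ => hfactor _
    _ = #(changes s N) := mul_one _

theorem mul_eq_ite_of_sign {a b : ℝ} (ha : a = 1 ∨ a = -1) (hb : b = 1 ∨ b = -1) :
    a * b = if a ≠ b then -1 else 1 := by
  rcases ha with rfl | rfl <;> rcases hb with rfl | rfl <;> norm_num

theorem mul_eq_prod_range (hs : ∀ j, s j = 1 ∨ s j = -1) (j : ℕ) :
    s 0 * s j = ∏ r ∈ range j, if s r ≠ s (r + 1) then -1 else 1 := by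
  induction j with
  | zero => rcases hs 0 with h | h <;> rw [h] <;> norm_num
  | succ j ih =>
    have hsq : s j * s j = 1 := by rcases hs j with h | h <;> rw [h] <;> norm_num
    rw [prod_range_succ, ← ih, ← mul_eq_ite_of_sign (hs j) (hs (j + 1))]
    linear_combination (-s 0 * s (j + 1)) * hsq

theorem mul_eq_prod_changes (hs : ∀ j, s j = 1 ∨ s j = -1) {N j : ℕ} (hj : j ≤ N) :
    s 0 * s j = ∏ r ∈ changes s N, if r < j then -1 else 1 := by
  rw [mul_eq_prod_range hs, ← prod_filter, ← prod_filter]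
  congr 1
  ext r
  simp only [changes, mem_filter, mem_range]
  exact ⟨fun ⟨hrj, hr⟩ => ⟨⟨by omega, hr⟩, hrj⟩,
    fun ⟨⟨_, hr⟩, hrj⟩ => ⟨hrj, hr⟩⟩

theorem eval_poly_mul_pos (hs : ∀ j, s j = 1 ∨ s j = -1) {N j : ℕ} (hj : j ≤ N) :
    0 < (poly s N).eval (j : ℝ) * s j := by
  have hsign : (poly s N).eval (j : ℝ) * s j =
      ∏ r ∈ changes s N, (if r < j then -1 else 1) * ((r : ℝ) + 1 / 2 - j) := by
    simp only [poly, eval_mul, eval_C, eval_prod, eval_sub, eval_X, prod_mul_distrib,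
      ← mul_eq_prod_changes hs hj]
    ring
  rw [hsign]
  refine prod_pos fun r _ => ?_
  split_ifs with hr
  · have : (r : ℝ) + 1 ≤ j := by exact_mod_cast hr
    linarith
  · have : (j : ℝ) ≤ r := by exact_mod_cast not_lt.mp hr
    linarith

end Sequence

variable {n : ℕ} {v : Fin n → ℝ}

theorem extend_eq_one_or (hv : ∀ j, v j = 1 ∨ v j = -1) (j : ℕ) :
    extend v j = 1 ∨ extend v j = -1 := by
  unfold extend
  split_ifs with h
  exacts [hv ⟨j, h⟩, Or.inl rfl]

theorem card_changes_extend_le : #(changes (extend v) (n - 1)) ≤ (changePairs v).ncard := by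
  rw [← Set.ncard_coe_finset]
  refine (Set.ncard_le_ncard ?_ (Set.toFinite _)).trans
    (Set.ncard_image_le (f := fun q => (q.1 : ℕ)) (Set.toFinite _))
  intro r hr
  simp only [changes, coe_filter, mem_range, Set.mem_ofPred_eq] at hr
  refine ⟨(⟨r, by omega⟩, ⟨r + 1, by omega⟩), ⟨rfl, ?_⟩, rfl⟩
  simpa [extend, show r < n by omega, show r + 1 < n by omega] using hr.2

theorem exists_polynomial_sign_pattern (hv : ∀ j, v j = 1 ∨ v j = -1) :
    ∃ p : ℝ[X], p.natDegree ≤ (changePairs v).ncard ∧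
      ∀ j : Fin n, 0 < p.eval ((j : ℕ) : ℝ) * v j := by
  refine ⟨poly (extend v) (n - 1), (natDegree_poly_le _).trans card_changes_extend_le,
    fun j => ?_⟩
  simpa [extend] using
    eval_poly_mul_pos (extend_eq_one_or hv) (j := j) (Nat.le_sub_one_of_lt j.isLt)

end SignPattern

/-- (Alon–Spencer) If `χ` is a full `m × n` sign pattern (every entry `1` or `-1`) with at most
`k` sign changes in each row, then there is a real matrix with sign pattern `χ` and rank at
most `k + 1`. -/
theorem full_sign_pattern_low_rank_lift
    (m n k : ℕ) (χ : Fin m → Fin n → ℝ)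
    (hfull : ∀ i j, χ i j = 1 ∨ χ i j = -1)
    (hrow : ∀ i,
      {p : Fin n × Fin n | (p.2 : ℕ) = (p.1 : ℕ) + 1 ∧ χ i p.1 ≠ χ i p.2}.ncard ≤ k) :
    ∃ A : Matrix (Fin m) (Fin n) ℝ,
      (∀ i j, A i j * χ i j > 0) ∧ A.rank ≤ k + 1 := by
  choose P hdeg hsign using fun i => SignPattern.exists_polynomial_sign_pattern (hfull i)
  exact ⟨Matrix.of fun i j => (P i).eval ((j : ℕ) : ℝ), hsign,
    Matrix.rank_of_eval_le_s1 k P _ fun i => (hdeg i).trans (hrow i)⟩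
end

section
/- Let x_1 < x_2 < … < x_n be real numbers, let r ≥ 1, and let V : Fin n → SignType be a sign vector whose generalized number of sign changes satisfies σ(V) < r. Then there exists a real polynomial p with degree p < r such that SignType.sign (p(x_i)) = V i for all i (in particular p(x_i) = 0 exactly when V i = 0). -/
/-- The number of sign changes of a vector `X`, i.e. the number of consecutive pairs of
entries at which `X` takes different values. -/
noncomputable def signChanges {n : ℕ} (X : Fin n → ℝ) : ℕ :=
  {p : Fin n × Fin n | (p.2 : ℕ) = (p.1 : ℕ) + 1 ∧ X p.1 ≠ X p.2}.ncard

/-- `X ∈ {1, -1}ⁿ` is a full completion of the sign vector `V` if it agrees with `V` at all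
nonzero positions of `V`. -/
def IsFullCompletion {n : ℕ} (V : Fin n → SignType) (X : Fin n → ℝ) : Prop :=
  (∀ j, X j = 1 ∨ X j = -1) ∧ (∀ j, V j = 1 → X j = 1) ∧ (∀ j, V j = -1 → X j = -1)

/-- The generalized number of sign changes of a sign vector `V`: the maximal number of
sign changes of a full completion of `V`. -/
noncomputable def genSignChanges {n : ℕ} (V : Fin n → SignType) : ℕ :=
  sSup {c | ∃ X : Fin n → ℝ, IsFullCompletion V X ∧ signChanges X = c}

/-!
Sweep the points from left to right, keeping a completion `ε` of the signs read so far and a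
polynomial `p` that realizes them, has the sign of the last entry of `ε` everywhere to the right
of the current point, and has degree at most the number of sign changes of `ε`. A new entry equal
to that sign costs nothing. Otherwise `ε` changes sign there, paying for one new root of `p`:
at the new point if its entry is `0`, and just before it otherwise.

The invariant fails on an all-zero prefix of length `a + 1` (a nonzero polynomial needs `a + 1`
roots there, against `a` sign changes), so the sweep starts at the first nonzero entry `v a`,
with `p = v a * ∏_{j < a} (X - y j)` and `ε` alternating along the leading zeros, so that each
of the `a` roots is matched by a sign change.
-/

open Finset Polynomial

namespace SignRealization

def signChangesUpTo (ε : ℕ → SignType) (m : ℕ) : ℕ :=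
  #{k ∈ range m | ε k ≠ ε (k + 1)}

def IsCompletionUpTo (v ε : ℕ → SignType) (m : ℕ) : Prop :=
  ∀ j ≤ m, ε j ≠ 0 ∧ (v j = 0 ∨ ε j = v j)

structure IsRealization (y : ℕ → ℝ) (v ε : ℕ → SignType) (m : ℕ) (p : ℝ[X]) : Prop where
  sign_eval : ∀ j ≤ m, SignType.sign (p.eval (y j)) = v j
  sign_eval_of_lt : ∀ t, y m < t → SignType.sign (p.eval t) = ε m
  degree_le : p.degree ≤ signChangesUpTo ε m

lemma signChangesUpTo_succ (ε : ℕ → SignType) (m : ℕ) :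
    signChangesUpTo ε (m + 1) = signChangesUpTo ε m + if ε m = ε (m + 1) then 0 else 1 := by
  unfold signChangesUpTo
  rw [range_add_one, filter_insert]
  by_cases h : ε m = ε (m + 1) <;> simp [h]

lemma signChangesUpTo_congr {ε ε' : ℕ → SignType} {m : ℕ} (h : ∀ k ≤ m, ε k = ε' k) :
    signChangesUpTo ε m = signChangesUpTo ε' m := by
  unfold signChangesUpTo
  congr 1
  refine filter_congr fun k hk => ?_
  rw [mem_range] at hk
  rw [h k hk.le, h (k + 1) hk]

lemma signChangesUpTo_update (ε : ℕ → SignType) (m : ℕ) (s : SignType) :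
    signChangesUpTo (Function.update ε (m + 1) s) (m + 1) =
      signChangesUpTo ε m + if ε m = s then 0 else 1 := by
  rw [signChangesUpTo_succ, Function.update_self, Function.update_of_ne (by omega),
    signChangesUpTo_congr fun k hk => Function.update_of_ne (by omega) _ _]

lemma signChangesUpTo_eq_self {ε : ℕ → SignType} {m : ℕ} (h : ∀ k < m, ε k ≠ ε (k + 1)) :
    signChangesUpTo ε m = m := by
  rw [signChangesUpTo, filter_true_of_mem fun k hk => h k (mem_range.mp hk), card_range]

lemma sign_eval_mul_C_sub_X (p : ℝ[X]) (ρ t : ℝ) :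
    SignType.sign ((p * (C ρ - X)).eval t) = SignType.sign (p.eval t) * SignType.sign (ρ - t) := by
  simp [sign_mul]

lemma sign_signType_cast (s : SignType) : SignType.sign (s : ℝ) = s := by
  cases s <;> simp

lemma signType_cast_ne_zero {s : SignType} (hs : s ≠ 0) : (s : ℝ) ≠ 0 := by
  cases s <;> simp_all

lemma signType_cast_eq_one_or_neg_one {s : SignType} (hs : s ≠ 0) :
    (s : ℝ) = 1 ∨ (s : ℝ) = -1 := by
  cases s <;> simp_all

lemma signType_cast_inj {s t : SignType} : (s : ℝ) = t ↔ s = t :=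
  ⟨fun h => by simpa only [sign_signType_cast] using congrArg SignType.sign h, congrArg _⟩

lemma signType_eq_zero_or_eq_neg {s e : SignType} (he : e ≠ 0) (hse : s ≠ e) :
    s = 0 ∨ s = -e := by
  decide +revert

lemma exists_isRealization_of_leading_zeros {y : ℕ → ℝ} {v : ℕ → SignType} {a : ℕ}
    (ha : v a ≠ 0) (hv : ∀ j < a, v j = 0) (hy : StrictMonoOn y (Set.Iic a)) :
    ∃ ε p, IsCompletionUpTo v ε a ∧ IsRealization y v ε a p := by
  set w := v a
  have hε : ∀ j, w * (-1) ^ (a + j) ≠ 0 := fun j => mul_ne_zero ha (pow_ne_zero _ (by decide))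
  have hεa : w * (-1) ^ (a + a) = w := by rw [Even.neg_one_pow ⟨a, rfl⟩, mul_one]
  have hsign : ∀ t, y a ≤ t →
      SignType.sign ((C (w : ℝ) * ∏ j ∈ range a, (X - C (y j))).eval t) = w := by
    intro t ht
    have hprod : 0 < ∏ j ∈ range a, (t - y j) := prod_pos fun j hj =>
      sub_pos.mpr ((hy (Set.mem_Iic.mpr (mem_range.mp hj).le) Set.self_mem_Iic
        (mem_range.mp hj)).trans_le ht)
    simp [eval_prod, sign_mul, sign_signType_cast, sign_pos hprod]
  refine ⟨fun j => w * (-1) ^ (a + j), C (w : ℝ) * ∏ j ∈ range a, (X - C (y j)),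
    fun j hj => ⟨hε j, ?_⟩, ⟨fun j hj => ?_, fun t ht => (hsign t ht.le).trans hεa.symm, ?_⟩⟩
  · rcases hj.lt_or_eq with hj | rfl
    · exact Or.inl (hv j hj)
    · exact Or.inr hεa
  · rcases hj.lt_or_eq with hj | rfl
    · rw [hv j hj, eval_mul, eval_prod, prod_eq_zero (mem_range.mpr hj) (by simp), mul_zero,
        sign_zero]
    · exact hsign _ le_rfl
  · have hflip : ∀ k, w * (-1) ^ (a + k) ≠ w * (-1) ^ (a + (k + 1)) := fun k => by
      rw [← add_assoc, pow_succ, ← mul_assoc, mul_neg_one]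
      exact mt SignType.self_eq_neg_iff.mp (hε k)
    rw [signChangesUpTo_eq_self fun k _ => hflip k, degree_C_mul (signType_cast_ne_zero ha),
      degree_prod]
    simp

lemma IsCompletionUpTo.update {v ε : ℕ → SignType} {m : ℕ} (hε : IsCompletionUpTo v ε m)
    {s : SignType} (hs : s ≠ 0) (hsv : v (m + 1) = 0 ∨ s = v (m + 1)) :
    IsCompletionUpTo v (Function.update ε (m + 1) s) (m + 1) := by
  intro j hj
  rcases hj.lt_or_eq with hj | rfl
  · rw [Function.update_of_ne (by omega)]
    exact hε j (by omega)
  · rw [Function.update_self]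
    exact ⟨hs, hsv⟩

lemma IsRealization.exists_succ {y : ℕ → ℝ} {v ε : ℕ → SignType} {m : ℕ} {p : ℝ[X]}
    (hp : IsRealization y v ε m p) (hε : IsCompletionUpTo v ε m)
    (hy : StrictMonoOn y (Set.Iic (m + 1))) :
    ∃ ε' p', IsCompletionUpTo v ε' (m + 1) ∧ IsRealization y v ε' (m + 1) p' := by
  have hle : ∀ j ≤ m, y j ≤ y m := fun j hj =>
    hy.monotoneOn (Set.mem_Iic.mpr (by omega)) (Set.mem_Iic.mpr (by omega)) hj
  have hlt : y m < y (m + 1) :=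
    hy (Set.mem_Iic.mpr (by omega)) Set.self_mem_Iic (Nat.lt_succ_self m)
  have hεm : ε m ≠ 0 := (hε m le_rfl).1
  by_cases hkeep : v (m + 1) = ε m
  · refine ⟨Function.update ε (m + 1) (ε m), p, hε.update hεm (Or.inr hkeep.symm),
      ⟨fun j hj => ?_, fun t ht => ?_, ?_⟩⟩
    · rcases hj.lt_or_eq with hj | rfl
      · exact hp.sign_eval j (by omega)
      · rw [hkeep]
        exact hp.sign_eval_of_lt _ hlt
    · rw [Function.update_self]
      exact hp.sign_eval_of_lt t (hlt.trans ht)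
    · rw [signChangesUpTo_update, if_pos rfl, add_zero]
      exact hp.degree_le
  have hnew : v (m + 1) = 0 ∨ v (m + 1) = -ε m := signType_eq_zero_or_eq_neg hεm hkeep
  obtain ⟨ρ, hmρ, hρ, hρsign⟩ : ∃ ρ, y m < ρ ∧ ρ ≤ y (m + 1) ∧
      ε m * SignType.sign (ρ - y (m + 1)) = v (m + 1) := by
    rcases hnew with h0 | hneg
    · exact ⟨y (m + 1), hlt, le_rfl, by simp [h0]⟩
    · refine ⟨(y m + y (m + 1)) / 2, by linarith, by linarith, ?_⟩
      rw [sign_neg (by linarith), hneg, mul_neg_one]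
  refine ⟨Function.update ε (m + 1) (-ε m), p * (C ρ - X),
    hε.update (mt SignType.neg_eq_zero_iff.mp hεm) (hnew.imp_right Eq.symm),
    ⟨fun j hj => ?_, fun t ht => ?_, ?_⟩⟩
  · rw [sign_eval_mul_C_sub_X]
    rcases hj.lt_or_eq with hj | rfl
    · rw [hp.sign_eval j (by omega), sign_pos (sub_pos.mpr ((hle j (by omega)).trans_lt hmρ)),
        mul_one]
    · rw [hp.sign_eval_of_lt _ hlt, hρsign]
  · rw [sign_eval_mul_C_sub_X, hp.sign_eval_of_lt t (hlt.trans ht),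
      sign_neg (sub_neg.mpr (hρ.trans_lt ht)), Function.update_self, mul_neg_one]
  · rw [signChangesUpTo_update, if_neg (mt SignType.self_eq_neg_iff.mp hεm)]
    calc (p * (C ρ - X)).degree ≤ p.degree + (C ρ - X).degree := degree_mul_le _ _
      _ ≤ signChangesUpTo ε m + 1 := by
        rw [← neg_sub, degree_neg, degree_X_sub_C]
        exact add_le_add_left hp.degree_le 1
      _ = ↑(signChangesUpTo ε m + 1) := by push_cast; rfl

lemma exists_isRealization_of_le {y : ℕ → ℝ} {v : ℕ → SignType} {a m : ℕ}
    (ha : v a ≠ 0) (hv : ∀ j < a, v j = 0) (ham : a ≤ m) (hy : StrictMonoOn y (Set.Iic m)) :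
    ∃ ε p, IsCompletionUpTo v ε m ∧ IsRealization y v ε m p := by
  induction m, ham using Nat.le_induction with
  | base => exact exists_isRealization_of_leading_zeros ha hv hy
  | succ m _ ih =>
    obtain ⟨ε, p, hε, hp⟩ := ih (hy.mono (Set.Iic_subset_Iic.mpr m.le_succ))
    exact hp.exists_succ hε hy

lemma signChanges_eq_signChangesUpTo {n : ℕ} (ε : ℕ → SignType) :
    signChanges (fun i : Fin n => (ε i : ℝ)) = signChangesUpTo ε (n - 1) := by
  rw [signChanges, signChangesUpTo, ← Set.ncard_coe_finset]
  refine Set.ncard_congr (fun q _ => (q.1 : ℕ)) ?_ ?_ ?_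
  · rintro ⟨i, j⟩ ⟨hij, hne⟩
    dsimp only at hij hne
    rw [ne_eq, signType_cast_inj, hij] at hne
    simp only [coe_filter, mem_range, Set.mem_ofPred_eq]
    exact ⟨by omega, hne⟩
  · rintro ⟨i, j⟩ ⟨i', j'⟩ ⟨hij, -⟩ ⟨hij', -⟩ h
    dsimp only at hij hij' h
    simp only [Prod.mk.injEq, Fin.ext_iff]
    omega
  · intro k hk
    simp only [coe_filter, mem_range, Set.mem_ofPred_eq] at hk
    refine ⟨(⟨k, by omega⟩, ⟨k + 1, by omega⟩), ⟨rfl, ?_⟩, rfl⟩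
    simpa [signType_cast_inj] using hk.2

lemma IsCompletionUpTo.isFullCompletion {n : ℕ} {V : Fin n → SignType} {v ε : ℕ → SignType}
    (hε : IsCompletionUpTo v ε (n - 1)) (hv : ∀ i : Fin n, v i = V i) :
    IsFullCompletion V fun i => (ε i : ℝ) := by
  have hε' : ∀ i : Fin n, ε i ≠ 0 ∧ (V i = 0 ∨ ε i = V i) := fun i => by
    simpa only [hv] using hε i (by omega)
  refine ⟨fun i => signType_cast_eq_one_or_neg_one (hε' i).1, fun i hi => ?_, fun i hi => ?_⟩ <;>
    simp [((hε' i).2.resolve_left (by simp [hi])).trans hi]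

lemma signChanges_le_genSignChanges {n : ℕ} {V : Fin n → SignType} {ξ : Fin n → ℝ}
    (hξ : IsFullCompletion V ξ) : signChanges ξ ≤ genSignChanges V := by
  refine le_csSup ⟨Nat.card (Fin n × Fin n), ?_⟩ ⟨ξ, hξ, rfl⟩
  rintro c ⟨η, -, rfl⟩
  exact Set.ncard_le_card _

theorem exists_polynomial_sign_eq {n : ℕ} (x : Fin n → ℝ) (hx : StrictMono x)
    (V : Fin n → SignType) (hV : ∃ i, V i ≠ 0) :
    ∃ ξ : Fin n → ℝ, IsFullCompletion V ξ ∧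
      ∃ p : ℝ[X], p.degree ≤ signChanges ξ ∧ ∀ i, SignType.sign (p.eval (x i)) = V i := by
  obtain ⟨i₀, hi₀⟩ := hV
  set v : ℕ → SignType := fun k => if h : k < n then V ⟨k, h⟩ else 0
  set y : ℕ → ℝ := fun k => if h : k < n then x ⟨k, h⟩ else 0
  have hv : ∀ i : Fin n, v i = V i := fun i => dif_pos i.isLt
  have hyx : ∀ i : Fin n, y i = x i := fun i => dif_pos i.isLt
  have hy : StrictMonoOn y (Set.Iic (n - 1)) := by
    intro a ha b hb hab
    simp only [Set.mem_Iic] at ha hb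
    simp only [y, dif_pos (show a < n by omega), dif_pos (show b < n by omega)]
    exact hx hab
  have hex : ∃ k, v k ≠ 0 := ⟨i₀, by rwa [hv]⟩
  obtain ⟨ε, p, hε, hp⟩ := exists_isRealization_of_le (Nat.find_spec hex)
    (fun j hj => not_not.mp (Nat.find_min hex hj))
    ((Nat.find_min' hex (by rwa [hv])).trans (by omega)) hy
  refine ⟨fun i => ε i, hε.isFullCompletion hv, p, ?_, fun i => ?_⟩
  · rw [signChanges_eq_signChangesUpTo]
    exact hp.degree_le
  · rw [← hv, ← hyx]
    exact hp.sign_eval i (by omega)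

end SignRealization

theorem covector_of_alternating_matroid_realized_by_polynomial_general
    (n r : ℕ) (x : Fin n → ℝ) (hx : StrictMono x)
    (V : Fin n → SignType) (hV : genSignChanges V < r) :
    ∃ p : Polynomial ℝ, p.degree < (r : ℕ) ∧
      ∀ i, SignType.sign (p.eval (x i)) = V i := by
  by_cases hzero : ∀ i, V i = 0
  · exact ⟨0, by simp, fun i => by simp [hzero i]⟩
  obtain ⟨ξ, hξ, p, hp, hpV⟩ :=
    SignRealization.exists_polynomial_sign_eq x hx V (not_forall.mp hzero)
  refine ⟨p, hp.trans_lt ?_, hpV⟩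
  exact_mod_cast (SignRealization.signChanges_le_genSignChanges hξ).trans_lt hV

/-- A sign vector whose generalized number of sign changes is less than `r ≥ 1` is realized,
along the points `x₁ < ⋯ < xₙ`, by the sign vector of values of a real polynomial of degree
less than `r` (the vector is a covector of the realizable alternating oriented matroid
`C^{n,r}`). -/
theorem covector_of_alternating_matroid_realized_by_polynomial
    (n r : ℕ) (hr : 1 ≤ r) (x : Fin n → ℝ) (hx : StrictMono x)
    (V : Fin n → SignType) (hV : genSignChanges V < r) :
    ∃ p : Polynomial ℝ, p.degree < (r : ℕ) ∧
      ∀ i, SignType.sign (p.eval (x i)) = V i :=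
  covector_of_alternating_matroid_realized_by_polynomial_general n r x hx V hV
end

section
/- (Camion–Hoffman) Let A : Matrix (Fin n) (Fin n) ℝ have nonnegative entries. Then the following are equivalent: (1) every complex matrix B : Matrix (Fin n) (Fin n) ℂ with Complex.abs (B i j) = A i j for all i, j satisfies det B ≠ 0; (2) there exist a permutation σ of Fin n and a function d : Fin n → ℝ with d j ≥ 0 for all j such that for every i, A (σ i) i * d i > ∑_{j ≠ i} A (σ i) j * d j. -/
/-!
Scaling the columns of `B` by `d ≥ 0` and permuting its rows by `σ` makes `B` strictly diagonally
dominant, so `det B ≠ 0` (Gershgorin). Conversely, suppose no such `σ, d` exist. Let `F j`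
(`Matrix.balancedSet A j`) be the set of `x` in the standard simplex such that in no row `i` does
`A i j * x j` exceed half of `∑ k, A i k * x k`. If `x` lay in no `F j`, each column would have a
row in which it carries more than half of the row sum; distinct columns get distinct rows, so this
is a permutation for which `x` is a valid scaling. Hence the `F j` cover the simplex, and since the
vertex `e j` lies in every `F i` with `i ≠ j`, Berge's theorem gives a common point `d`. In every
row the numbers `A i k * d k` then satisfy the polygon inequalities, so they are the lengths of
complex numbers summing to `0`; dividing by `d k` gives a lift `B` of `A` with `B *ᵥ d = 0`.
-/

open Finset Metric

theorem exists_norm_eq_norm_sub_eq {E : Type*} [NormedAddCommGroup E] [NormedSpace ℝ E]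
    (hE : 1 < Module.rank ℝ E) (w : E) {a c : ℝ} (ha : 0 ≤ a)
    (hc₁ : |‖w‖ - a| ≤ c) (hc₂ : c ≤ ‖w‖ + a) :
    ∃ z, ‖z‖ = a ∧ ‖w - z‖ = c := by
  have : Nontrivial E := rank_pos_iff_nontrivial.mp (zero_lt_one.trans hE)
  obtain ⟨u, hu, hwu⟩ : ∃ u : E, ‖u‖ = 1 ∧ w = ‖w‖ • u := by
    by_cases hw : w = 0
    · obtain ⟨u, hu⟩ := exists_norm_eq E zero_le_one
      exact ⟨u, hu, by simp [hw]⟩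
    · refine ⟨‖w‖⁻¹ • w, ?_, ?_⟩
      · rw [norm_smul, norm_inv, norm_norm, inv_mul_cancel₀ (norm_ne_zero_iff.mpr hw)]
      · rw [smul_smul, mul_inv_cancel₀ (norm_ne_zero_iff.mpr hw), one_smul]
  have hnear : ‖w - a • u‖ = |‖w‖ - a| := by
    rw [← Real.norm_eq_abs, ← mul_one ‖_ - a‖, ← hu, ← norm_smul, sub_smul, ← hwu]
  have hfar : ‖w - (-a) • u‖ = ‖w‖ + a := by
    rw [← Real.norm_of_nonneg (by positivity : 0 ≤ ‖w‖ + a), ← mul_one ‖_ + a‖, ← hu,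
      ← norm_smul, ← sub_neg_eq_add, sub_smul, ← hwu]
  have hsphere : ∀ t : ℝ, |t| = a → t • u ∈ sphere (0 : E) a := fun t ht => by
    rw [mem_sphere_zero_iff_norm, norm_smul, hu, mul_one, Real.norm_eq_abs, ht]
  obtain ⟨z, hz, hzc⟩ := (isConnected_sphere hE 0 ha).isPreconnected.intermediate_value
    (f := fun z => ‖w - z‖) (hsphere a (abs_of_nonneg ha))
    (hsphere (-a) (by rw [abs_neg, abs_of_nonneg ha])) (by fun_prop)
    (by rw [hnear, hfar]; exact ⟨hc₁, hc₂⟩)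
  exact ⟨z, mem_sphere_zero_iff_norm.mp hz, hzc⟩

theorem exists_forall_norm_eq_sum_eq {ι E : Type*} [DecidableEq ι] [NormedAddCommGroup E]
    [NormedSpace ℝ E] (hE : 1 < Module.rank ℝ E) (s : Finset ι) {a : ι → ℝ}
    (ha : ∀ j ∈ s, 0 ≤ a j) {w : E} (hw : ‖w‖ ≤ ∑ j ∈ s, a j)
    (hpoly : ∀ j ∈ s, 2 * a j ≤ ∑ k ∈ s, a k + ‖w‖) :
    ∃ z : ι → E, (∀ j ∈ s, ‖z j‖ = a j) ∧ ∑ j ∈ s, z j = w := by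
  induction s using Finset.induction_on generalizing w with
  | empty => exact ⟨0, by simp, by simpa [eq_comm] using hw⟩
  | insert p t hp ih =>
    rw [sum_insert hp] at hw hpoly
    have hat : ∀ j ∈ t, a j ≤ ∑ k ∈ t, a k := fun j hj =>
      single_le_sum (fun k hk => ha k (mem_insert_of_mem hk)) hj
    have hap := hpoly p (mem_insert_self p t)
    -- `‖w - zp‖ = c` needs `|‖w‖ - a p| ≤ c ≤ ‖w‖ + a p` for `zp` to exist and
    -- `2 * a j - ∑ k ∈ t, a k ≤ c ≤ ∑ k ∈ t, a k` for the induction hypothesis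
    set c := min (‖w‖ + a p) (∑ k ∈ t, a k)
    have hc₁ : |‖w‖ - a p| ≤ c := by
      refine abs_sub_le_iff.mpr ⟨?_, ?_⟩ <;> refine le_min ?_ ?_ <;>
        linarith [ha p (mem_insert_self p t), norm_nonneg w]
    obtain ⟨zp, hzp, hwzp⟩ := exists_norm_eq_norm_sub_eq hE w (ha p (mem_insert_self p t)) hc₁
      (min_le_left _ _)
    obtain ⟨z, hz, hzsum⟩ := ih (fun j hj => ha j (mem_insert_of_mem hj))
      (by rw [hwzp]; exact min_le_right _ _) (fun j hj => by
        have := hpoly j (mem_insert_of_mem hj)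
        rw [hwzp, ← sub_le_iff_le_add']
        refine le_min ?_ ?_ <;> linarith [hat j hj])
    refine ⟨Function.update z p zp, ?_, ?_⟩
    · intro j hj
      rcases eq_or_ne j p with rfl | hjp
      · rw [Function.update_self, hzp]
      · rw [Function.update_of_ne hjp, hz j ((mem_insert.mp hj).resolve_left hjp)]
    · rw [sum_insert hp, Function.update_self, sum_update_of_notMem hp, hzsum, add_sub_cancel]

theorem Convex.berge_theorem {ι E : Type*} [DecidableEq ι] [NormedAddCommGroup E]
    [NormedSpace ℝ E] {s : Finset ι} {C : ι → Set E} (hconv : ∀ i ∈ s, Convex ℝ (C i))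
    (hcomp : ∀ i ∈ s, IsCompact (C i)) (hunion : Convex ℝ (⋃ i ∈ s, C i))
    (hne : (⋃ i ∈ s, C i).Nonempty) (hinter : ∀ j ∈ s, (⋂ i ∈ s.erase j, C i).Nonempty) :
    (⋂ i ∈ s, C i).Nonempty := by
  induction s using Finset.induction_on generalizing C with
  | empty => simp at hne
  | insert p t hp ih =>
    obtain rfl | ⟨q, hq⟩ := t.eq_empty_or_nonempty
    · simpa using hne
    by_contra hempty
    have hconv' : ∀ i ∈ t, Convex ℝ (C i) := fun i hi => hconv i (mem_insert_of_mem hi)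
    have hcomp' : ∀ i ∈ t, IsCompact (C i) := fun i hi => hcomp i (mem_insert_of_mem hi)
    set C' := ⋂ i ∈ t, C i
    obtain ⟨y, hy⟩ : C'.Nonempty := by
      simpa only [erase_insert hp] using hinter p (mem_insert_self p t)
    have hpoint : ∀ j ∈ t, ∃ x ∈ C p, x ∈ ⋂ i ∈ t.erase j, C i := fun j hj => by
      obtain ⟨x, hx⟩ := hinter j (mem_insert_of_mem hj)
      rw [erase_insert_of_ne (ne_of_mem_of_not_mem hj hp).symm, set_biInter_insert] at hx
      exact ⟨x, hx⟩
    have hdisj : Disjoint C' (C p) := Set.disjoint_left.mpr fun x hx hxp =>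
      hempty ⟨x, by rw [set_biInter_insert]; exact ⟨hxp, hx⟩⟩
    obtain ⟨f, u, v, hfu, huv, hfv⟩ := geometric_hahn_banach_compact_closed
      (convex_iInter₂ hconv')
      ((hcomp' q hq).of_isClosed_subset (isClosed_biInter fun i hi => (hcomp' i hi).isClosed)
        (Set.biInter_subset_of_mem hq))
      (hconv p (mem_insert_self p t)) (hcomp p (mem_insert_self p t)).isClosed hdisj
    -- Slice by the separating hyperplane `H`: it misses `C p`, so the slices of the `C i`,
    -- `i ∈ t`, inherit the hypotheses, while their common points would lie in `C'`.
    set H := {x | f x = u}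
    have hH : Convex ℝ H := convex_hyperplane f.isLinear u
    have hcross : ∀ S : Set E, Convex ℝ S → y ∈ S → ∀ x ∈ S, x ∈ C p → (S ∩ H).Nonempty :=
      fun S hS hyS x hxS hx => hS.isPreconnected.intermediate_value hyS hxS
        f.continuous.continuousOn ⟨(hfu y hy).le, huv.le.trans (hfv x hx).le⟩
    have hslice : (⋃ i ∈ insert p t, C i) ∩ H = ⋃ i ∈ t, C i ∩ H := by
      have : C p ∩ H = ∅ := Set.eq_empty_of_forall_notMem fun x ⟨hx, hxH⟩ =>
        (huv.trans (hfv x hx)).ne' hxH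
      rw [set_biUnion_insert, Set.union_inter_distrib_right, this, Set.empty_union,
        Set.iUnion₂_inter]
    obtain ⟨w, hw⟩ := ih (C := fun i => C i ∩ H) (fun i hi => (hconv' i hi).inter hH)
      (fun i hi => (hcomp' i hi).inter_right (isClosed_eq f.continuous continuous_const))
      (hslice ▸ hunion.inter hH)
      (by
        obtain ⟨x, hx, -⟩ := hpoint q hq
        exact hslice ▸ hcross _ hunion (Set.mem_biUnion (mem_insert_of_mem hq)
          (Set.mem_iInter₂.mp hy q hq)) x (Set.mem_biUnion (mem_insert_self p t) hx) hx)
      (fun j hj => by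
        obtain ⟨x, hx, hxG⟩ := hpoint j hj
        obtain ⟨z, hz, hzH⟩ :=
          hcross _ (convex_iInter₂ fun i hi => hconv' i (mem_of_mem_erase hi))
          (Set.biInter_subset_biInter_left (erase_subset j t) hy) x hxG hx
        exact ⟨z, Set.mem_iInter₂.mpr fun i hi => ⟨Set.mem_iInter₂.mp hz i hi, hzH⟩⟩)
    have hwC' : w ∈ C' := Set.mem_iInter₂.mpr fun i hi => (Set.mem_iInter₂.mp hw i hi).1
    exact (hfu w hwC').ne (Set.mem_iInter₂.mp hw q hq).2

namespace Matrix

variable {ι : Type*} [Fintype ι]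

section

variable (A : Matrix ι ι ℝ)

def balancedSet (j : ι) : Set (ι → ℝ) :=
  {x ∈ stdSimplex ℝ ι | ∀ i, 2 * (A i j * x j) ≤ (A *ᵥ x) i}

theorem convex_balancedSet (j : ι) : Convex ℝ (A.balancedSet j) := by
  refine (convex_stdSimplex ℝ ι).inter fun x hx y hy a b ha hb _ i => ?_
  simp only [mulVec_add, mulVec_smul, Pi.add_apply, Pi.smul_apply, smul_eq_mul] at *
  nlinarith [hx i, hy i]

theorem isCompact_balancedSet (j : ι) : IsCompact (A.balancedSet j) := by
  refine (isCompact_stdSimplex ℝ ι).of_isClosed_subset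
    ((isClosed_stdSimplex ℝ ι).inter ?_) (Set.sep_subset _ _)
  show IsClosed {x : ι → ℝ | ∀ i, 2 * (A i j * x j) ≤ (A *ᵥ x) i}
  rw [Set.ofPred_forall]
  exact isClosed_iInter fun i => isClosed_le (by fun_prop)
    ((continuous_apply i).comp (continuous_const.matrix_mulVec continuous_id))

end

variable [DecidableEq ι] {A : Matrix ι ι ℝ}

theorem det_ne_zero_of_perm_scaled_dominant {K : Type*} [RCLike K] {B : Matrix ι ι K}
    {σ : Equiv.Perm ι} {d : ι → ℝ} (hd : ∀ j, 0 ≤ d j)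
    (hdom : ∀ i, ∑ j ∈ univ.erase i, ‖B (σ i) j‖ * d j < ‖B (σ i) i‖ * d i) :
    B.det ≠ 0 := by
  set C := (B * diagonal fun j => (d j : K)).submatrix σ id
  have hC : ∀ i j, ‖C i j‖ = ‖B (σ i) j‖ * d j := fun i j => by
    simp [C, abs_of_nonneg (hd j)]
  have hCdet : C.det ≠ 0 := det_ne_zero_of_sum_row_lt_diag fun i => by
    simpa only [hC] using hdom i
  intro hB
  rw [det_permute, det_mul, hB, zero_mul, mul_zero] at hCdet
  exact hCdet rfl

theorem single_mem_balancedSet (hA : ∀ i j, 0 ≤ A i j) {i j : ι} (hij : i ≠ j) :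
    Pi.single j 1 ∈ A.balancedSet i := by
  refine ⟨single_mem_stdSimplex ℝ j, fun r => ?_⟩
  simp [hij, hA r j]

theorem exists_perm_sum_erase_lt (hA : ∀ i j, 0 ≤ A i j) {x : ι → ℝ} (hx : ∀ k, 0 ≤ x k)
    (hrow : ∀ j, ∃ i, (A *ᵥ x) i < 2 * (A i j * x j)) :
    ∃ σ : Equiv.Perm ι, ∀ i, ∑ k ∈ univ.erase i, A (σ i) k * x k < A (σ i) i * x i := by
  choose r hr using hrow
  simp only [mulVec, dotProduct] at hr
  -- two columns cannot both carry more than half of the same row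
  have hinj : Function.Injective r := fun j j' hjj' => by
    by_contra hne
    have hpair := sum_le_sum_of_subset_of_nonneg (subset_univ {j, j'})
      fun k _ _ => mul_nonneg (hA (r j') k) (hx k)
    rw [sum_pair hne] at hpair
    linarith [hr j, hr j', hjj' ▸ hr j]
  refine ⟨Equiv.ofBijective r hinj.bijective_of_finite, fun i => ?_⟩
  have := add_sum_erase univ (fun k => A (r i) k * x k) (mem_univ i)
  exact (by linarith [hr i] : ∑ k ∈ univ.erase i, A (r i) k * x k < A (r i) i * x i)

theorem exists_det_eq_zero_of_balanced (hA : ∀ i j, 0 ≤ A i j) {d : ι → ℝ}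
    (hd : ∀ j, 0 ≤ d j) (hd' : d ≠ 0) (hbal : ∀ i j, 2 * (A i j * d j) ≤ (A *ᵥ d) i) :
    ∃ B : Matrix ι ι ℂ, (∀ i j, ‖B i j‖ = A i j) ∧ B.det = 0 := by
  have hE : 1 < Module.rank ℝ ℂ := by rw [Complex.rank_real_complex]; norm_num
  choose z hz hzsum using fun i => exists_forall_norm_eq_sum_eq hE univ
    (a := fun k => A i k * d k) (w := (0 : ℂ)) (fun k _ => mul_nonneg (hA i k) (hd k))
    (by simpa using sum_nonneg fun k _ => mul_nonneg (hA i k) (hd k))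
    (fun j _ => by simpa [mulVec, dotProduct] using hbal i j)
  set B : Matrix ι ι ℂ := of fun i k => if d k = 0 then (A i k : ℂ) else z i k / d k
  have hB : ∀ i k, ‖B i k‖ = A i k := fun i k => by
    by_cases hk : d k = 0
    · simp [B, hk, abs_of_nonneg (hA i k)]
    · simp [B, hk, hz i k (mem_univ k), abs_of_nonneg (hd k)]
  have hBd : ∀ i k, B i k * d k = z i k := fun i k => by
    by_cases hk : d k = 0
    · have hzk : z i k = 0 := norm_eq_zero.mp (by rw [hz i k (mem_univ k), hk, mul_zero])
      simp [B, hk, hzk]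
    · simp [B, hk]
  refine ⟨B, hB, exists_mulVec_eq_zero_iff.mp ⟨fun k => d k, ?_, ?_⟩⟩
  · exact fun h => hd' (funext fun k => by simpa using congrFun h k)
  · ext i
    simp only [mulVec, dotProduct, hBd, hzsum, Pi.zero_apply]

theorem exists_det_eq_zero_of_not_exists_perm (hA : ∀ i j, 0 ≤ A i j)
    (h : ¬ ∃ (σ : Equiv.Perm ι) (d : ι → ℝ), (∀ j, 0 ≤ d j) ∧
      ∀ i, ∑ j ∈ univ.erase i, A (σ i) j * d j < A (σ i) i * d i) :
    ∃ B : Matrix ι ι ℂ, (∀ i j, ‖B i j‖ = A i j) ∧ B.det = 0 := by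
  obtain ⟨j₀⟩ : Nonempty ι :=
    not_isEmpty_iff.mp fun _ => h ⟨1, 0, fun _ => le_rfl, isEmptyElim⟩
  have hcover : ⋃ j ∈ univ, A.balancedSet j = stdSimplex ℝ ι := by
    refine subset_antisymm (Set.iUnion₂_subset fun j _ => Set.sep_subset _ _) fun x hx => ?_
    by_contra hx'
    simp only [Set.mem_iUnion, mem_univ, exists_const, not_exists] at hx'
    obtain ⟨σ, hσ⟩ := exists_perm_sum_erase_lt hA hx.1 fun j => by
      simpa [balancedSet, hx] using hx' j
    exact h ⟨σ, x, hx.1, hσ⟩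
  obtain ⟨d, hd⟩ := Convex.berge_theorem (s := univ) (fun j _ => convex_balancedSet A j)
    (fun j _ => isCompact_balancedSet A j) (hcover ▸ convex_stdSimplex ℝ ι)
    (hcover ▸ ⟨_, single_mem_stdSimplex ℝ j₀⟩)
    fun j _ => ⟨Pi.single j 1, Set.mem_iInter₂.mpr fun i hi =>
      single_mem_balancedSet hA (ne_of_mem_erase hi)⟩
  have hd' : ∀ j, d ∈ A.balancedSet j := fun j => Set.mem_iInter₂.mp hd j (mem_univ j)
  refine exists_det_eq_zero_of_balanced hA (hd' j₀).1.1 ?_ fun i k => (hd' k).2 i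
  rintro rfl
  simpa using (hd' j₀).1.2

end Matrix

/-- (Camion–Hoffman) For a square matrix `A` with nonnegative real entries, every complex
matrix whose entrywise absolute values are given by `A` is nonsingular iff the rows of `A`
can be permuted and the columns scaled by nonnegative reals so that the result is strictly
diagonally dominant. -/
theorem camion_hoffman
    (n : ℕ) (A : Matrix (Fin n) (Fin n) ℝ) (hA : ∀ i j, 0 ≤ A i j) :
    (∀ B : Matrix (Fin n) (Fin n) ℂ,
        (∀ i j, ‖B i j‖ = A i j) → B.det ≠ 0) ↔
    ∃ (σ : Equiv.Perm (Fin n)) (d : Fin n → ℝ), (∀ j, 0 ≤ d j) ∧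
      ∀ i, ∑ j ∈ Finset.univ.erase i, A (σ i) j * d j < A (σ i) i * d i := by
  constructor
  · intro hlift
    by_contra h
    obtain ⟨B, hB, hdet⟩ := Matrix.exists_det_eq_zero_of_not_exists_perm hA h
    exact hlift B hB hdet
  · rintro ⟨σ, d, hd, hdom⟩ B hB
    exact Matrix.det_ne_zero_of_perm_scaled_dominant hd (by simpa only [hB] using hdom)
end

section
/- Let A : Matrix (Fin n) (Fin n) ℝ have nonnegative entries. Then every complex matrix B : Matrix (Fin n) (Fin n) ℂ with Complex.abs (B i j) = A i j for all i, j satisfies det B ≠ 0 if and only if there does NOT exist c : Fin n → ℝ with c j ≥ 0 for all j, c not identically zero, such that for every row i and every index j₀, c j₀ * A i j₀ ≤ ∑_{j ≠ j₀} c j * A i j. -/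
/-!
A kernel vector `v` of a lift `B` gives the relation `c j = ‖v j‖`, by the triangle inequality
applied to the rows of `B *ᵥ v = 0`.

Conversely, nonnegative reals `r` satisfying the polygon inequalities are the side lengths of a
closed polygon in `ℂ`. Take a largest set `T` of indices carrying at most half of the total and any
`j₀ ∉ T`: the three groups `T`, `{j₀}` and the rest each carry at most half of the total, so their
sums are the sides of a triangle in `ℂ`, and the sides of one group can be laid out along the same
direction. Doing this in every row of `A` with the weights `c` gives phases `u i j` with
`∑ j, c j * A i j * u i j = 0`, i.e. a singular matrix `B i j = A i j * u i j` killing `c`.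
-/

open Finset Matrix

theorem Complex.exists_add_add_eq_zero_of_triangle_ineq {a b c : ℝ} (ha : 0 ≤ a) (hb : 0 ≤ b) (hc : 0 ≤ c)
    (hab : c ≤ a + b) (hbc : a ≤ b + c) (hca : b ≤ c + a) :
    ∃ y z : ℂ, ‖y‖ = b ∧ ‖z‖ = c ∧ a + y + z = 0 := by
  obtain rfl | ha := ha.eq_or_lt
  · obtain rfl : c = b := by linarith
    exact ⟨c, -c, by simp [hc], by simp [hc], by simp⟩
  -- place `y = p + q i` on the circle of radius `b`, with `p` chosen by the law of cosines
  set p : ℝ := (c ^ 2 - a ^ 2 - b ^ 2) / (2 * a) with hp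
  have h2ap : 2 * a * p = c ^ 2 - a ^ 2 - b ^ 2 := by rw [hp]; field_simp
  have hpb : p ^ 2 ≤ b ^ 2 := by
    have heron : 4 * a ^ 2 * (b ^ 2 - p ^ 2) =
        (a + b + c) * (a + b - c) * (c + a - b) * (b + c - a) := by
      linear_combination (-(2 * a * p) - (c ^ 2 - a ^ 2 - b ^ 2)) * h2ap
    have : 0 ≤ 4 * a ^ 2 * (b ^ 2 - p ^ 2) := by
      rw [heron]; apply mul_nonneg (mul_nonneg (mul_nonneg _ _) _) _ <;> linarith
    exact sub_nonneg.1 (nonneg_of_mul_nonneg_right this (by positivity))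
  set q : ℝ := Real.sqrt (b ^ 2 - p ^ 2)
  have hq : q ^ 2 = b ^ 2 - p ^ 2 := Real.sq_sqrt (by linarith)
  refine ⟨p + q * Complex.I, -((a + p : ℝ) + q * Complex.I), ?_, ?_, by push_cast; ring⟩
  · rw [Complex.norm_add_mul_I, show p ^ 2 + q ^ 2 = b ^ 2 by linarith, Real.sqrt_sq hb]
  · rw [norm_neg, Complex.norm_add_mul_I, show (a + p) ^ 2 + q ^ 2 = c ^ 2 by nlinarith,
      Real.sqrt_sq hc]

section Polygon

variable {ι : Type*} [Fintype ι] [DecidableEq ι]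

def PolygonInequalities (r : ι → ℝ) : Prop :=
  ∀ j, r j ≤ ∑ i ∈ univ.erase j, r i

theorem polygonInequalities_iff_two_mul_le_sum {r : ι → ℝ} :
    PolygonInequalities r ↔ ∀ j, 2 * r j ≤ ∑ i, r i := by
  refine forall_congr' fun j => ?_
  rw [← add_sum_erase _ _ (mem_univ j)]
  constructor <;> intro h <;> linarith

theorem polygonInequalities_norm_of_sum_eq_zero {z : ι → ℂ} (hz : ∑ i, z i = 0) :
    PolygonInequalities (‖z ·‖) := by
  intro j
  have hj : z j = -∑ i ∈ univ.erase j, z i :=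
    eq_neg_of_add_eq_zero_left ((add_sum_erase _ _ (mem_univ j)).trans hz)
  calc ‖z j‖ = ‖∑ i ∈ univ.erase j, z i‖ := by rw [hj, norm_neg]
    _ ≤ ∑ i ∈ univ.erase j, ‖z i‖ := norm_sum_le _ _

theorem exists_unit_combination_fin_three {a : Fin 3 → ℝ} (ha : ∀ k, 0 ≤ a k)
    (h : PolygonInequalities a) :
    ∃ v : Fin 3 → ℂ, (∀ k, ‖v k‖ = 1) ∧ ∑ k, a k * v k = 0 := by
  rw [polygonInequalities_iff_two_mul_le_sum] at h
  simp only [Fin.sum_univ_three] at h ⊢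
  obtain ⟨y, z, hy, hz, hsum⟩ := Complex.exists_add_add_eq_zero_of_triangle_ineq (ha 0) (ha 1) (ha 2)
    (by linarith [h 2]) (by linarith [h 0]) (by linarith [h 1])
  refine ⟨![1, Complex.exp (y.arg * Complex.I), Complex.exp (z.arg * Complex.I)], ?_, ?_⟩
  · intro k
    fin_cases k <;> simp [Complex.norm_exp_ofReal_mul_I]
  · simpa [← hy, ← hz, Complex.norm_mul_exp_arg_mul_I] using hsum

theorem exists_fin_three_partition {r : ι → ℝ} (hr : ∀ j, 0 ≤ r j)
    (h : ∀ j, 2 * r j ≤ ∑ i, r i) :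
    ∃ g : ι → Fin 3, ∀ k, 2 * ∑ j with g j = k, r j ≤ ∑ j, r j := by
  set S := ∑ i, r i
  have hS : 0 ≤ S := sum_nonneg fun j _ => hr j
  have hmono : ∀ s t : Finset ι, s ⊆ t → ∑ j ∈ s, r j ≤ ∑ j ∈ t, r j :=
    fun s t hst => sum_le_sum_of_subset_of_nonneg hst fun j _ _ => hr j
  obtain ⟨T, hT, hTmax⟩ := ((univ : Finset (Finset ι)).filter
    fun T => 2 * ∑ i ∈ T, r i ≤ S).exists_max_image card ⟨∅, by simp [hS]⟩
  simp only [mem_filter, mem_univ, true_and] at hT hTmax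
  by_cases hT_univ : T = univ
  · subst hT_univ
    refine ⟨fun _ => 0, fun k => ?_⟩
    linarith [hmono {j | (0 : Fin 3) = k} univ (filter_subset _ _)]
  obtain ⟨j₀, hj₀⟩ : ∃ j₀, j₀ ∉ T := by simpa [eq_univ_iff_forall] using hT_univ
  have hinsert : S < 2 * ∑ i ∈ insert j₀ T, r i := by
    by_contra! hle
    have := hTmax _ hle
    rw [card_insert_of_notMem hj₀] at this
    omega
  have hcompl := sum_compl_add_sum (insert j₀ T) r
  let g : ι → Fin 3 := fun j => if j ∈ T then 0 else if j = j₀ then 1 else 2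
  have hfiber : ∀ k t, (∀ j, g j = k → j ∈ t) → ∑ j with g j = k, r j ≤ ∑ j ∈ t, r j :=
    fun k t ht => hmono _ _ fun j hj => ht j (mem_filter.1 hj).2
  have hT₀ : ∑ j with g j = 0, r j ≤ ∑ j ∈ T, r j :=
    hfiber 0 T fun j => by simp only [g]; split_ifs <;> simp_all
  have hT₁ : ∑ j with g j = 1, r j ≤ r j₀ :=
    (hfiber 1 {j₀} fun j => by simp only [g]; split_ifs <;> simp_all).trans_eq (sum_singleton r j₀)
  have hT₂ : ∑ j with g j = 2, r j ≤ ∑ j ∈ (insert j₀ T)ᶜ, r j :=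
    hfiber 2 _ fun j => by simp only [g]; split_ifs <;> simp_all
  refine ⟨g, fun k => ?_⟩
  match k with
  | 0 => linarith
  | 1 => linarith [h j₀]
  | 2 => linarith

theorem PolygonInequalities.exists_unit_combination {r : ι → ℝ} (hr : ∀ j, 0 ≤ r j)
    (h : PolygonInequalities r) :
    ∃ u : ι → ℂ, (∀ j, ‖u j‖ = 1) ∧ ∑ j, r j * u j = 0 := by
  rw [polygonInequalities_iff_two_mul_le_sum] at h
  obtain ⟨g, hg⟩ := exists_fin_three_partition hr h
  obtain ⟨v, hv1, hv⟩ := exists_unit_combination_fin_three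
    (a := fun k => ∑ j with g j = k, r j) (fun k => sum_nonneg fun j _ => hr j)
    (polygonInequalities_iff_two_mul_le_sum.2 (by simpa only [sum_fiberwise] using hg))
  refine ⟨v ∘ g, fun j => hv1 (g j), ?_⟩
  rw [← sum_fiberwise univ g, ← hv]
  refine sum_congr rfl fun k _ => ?_
  push_cast
  rw [sum_mul]
  exact sum_congr rfl fun j hj => by rw [Function.comp_apply, (mem_filter.1 hj).2]

end Polygon

theorem Matrix.exists_norm_eq_mulVec_eq_zero {m n : Type*} [Fintype n] [DecidableEq n]
    {A : Matrix m n ℝ} (hA : ∀ i j, 0 ≤ A i j) {c : n → ℝ} (hc : ∀ j, 0 ≤ c j)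
    (hpoly : ∀ i, PolygonInequalities fun j => c j * A i j) :
    ∃ B : Matrix m n ℂ, (∀ i j, ‖B i j‖ = A i j) ∧ B *ᵥ (fun j => (c j : ℂ)) = 0 := by
  choose u hu1 hu using fun i =>
    (hpoly i).exists_unit_combination fun j => mul_nonneg (hc j) (hA i j)
  refine ⟨Matrix.of fun i j => A i j * u i j, fun i j => by simp [hu1, abs_of_nonneg (hA i j)],
    funext fun i => (sum_congr rfl fun j _ => ?_).trans (hu i)⟩
  simp only [Matrix.of_apply]
  push_cast
  ring

theorem Matrix.polygonInequalities_of_mulVec_eq_zero {m n : Type*} [Fintype n] [DecidableEq n]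
    {A : Matrix m n ℝ} {B : Matrix m n ℂ} (hBA : ∀ i j, ‖B i j‖ = A i j) {v : n → ℂ}
    (hv : B *ᵥ v = 0) (i : m) :
    PolygonInequalities fun j => ‖v j‖ * A i j := by
  simpa only [norm_mul, hBA, mul_comm] using
    polygonInequalities_norm_of_sum_eq_zero (congrFun hv i : ∑ j, B i j * v j = 0)

/-- For a square matrix `A` with nonnegative real entries, every complex matrix whose
entrywise absolute values are given by `A` is nonsingular iff there is no nonnegative, not
identically zero, scaling `c` of the columns such that in every row each scaled entry is at
most the sum of the other scaled entries (i.e. the columns of `A` are linearly independent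
over the triangle hyperfield). -/
theorem abs_pattern_nonsingular_iff_no_polygon_relation
    (n : ℕ) (A : Matrix (Fin n) (Fin n) ℝ) (hA : ∀ i j, 0 ≤ A i j) :
    (∀ B : Matrix (Fin n) (Fin n) ℂ,
        (∀ i j, ‖B i j‖ = A i j) → B.det ≠ 0) ↔
    ¬ ∃ c : Fin n → ℝ, (∀ j, 0 ≤ c j) ∧ c ≠ 0 ∧
        ∀ i j₀, c j₀ * A i j₀ ≤ ∑ j ∈ Finset.univ.erase j₀, c j * A i j := by
  constructor
  · rintro hB ⟨c, hc, hc0, hpoly⟩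
    obtain ⟨B, hBA, hBc⟩ := Matrix.exists_norm_eq_mulVec_eq_zero hA hc hpoly
    refine hB B hBA (Matrix.exists_mulVec_eq_zero_iff.1 ⟨_, fun h => hc0 ?_, hBc⟩)
    exact funext fun j => Complex.ofReal_eq_zero.1 (congrFun h j)
  · rintro hno B hBA hdet
    obtain ⟨v, hv0, hv⟩ := Matrix.exists_mulVec_eq_zero_iff.2 hdet
    refine hno ⟨fun j => ‖v j‖, fun j => norm_nonneg _, fun h => hv0 ?_, fun i => ?_⟩
    · exact funext fun j => norm_eq_zero.1 (congrFun h j)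
    · exact Matrix.polygonInequalities_of_mulVec_eq_zero hBA hv i
end

section
/- (Arav et al.) Let χ : Fin m → Fin n → SignType be a sign pattern. Then every matrix A : Matrix (Fin m) (Fin n) ℝ with SignType.sign (A i j) = χ i j for all i, j has rank A = n (equivalently, linearly independent columns) if and only if for every x : Fin n → SignType that is not identically zero there exists a row index i such that: (a) there exists j with χ i j * x j ≠ 0, and (b) all nonzero values among (χ i j * x j)_j are equal (all +1 or all −1). -/
/-!
Row `i` of `A *ᵥ v = 0` is a vanishing sum of reals `A i j * v j` of signs
`χ i j * sign (v j)`. A sum of reals with prescribed signs can vanish iff the signs are all zero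
or include both `1` and `-1`, and in that case explicit positive weights make it vanish. So a
kernel vector `v` of a realization violates the condition at `x = sign v`; conversely, if a nonzero
`x` violates it in every row `i`, choose such weights `d i` for the signs `χ i j * x j`: then
`A i j = d i j * χ i j` realizes `χ` and has `x` in its kernel.
-/

open Matrix

theorem Matrix.rank_eq_card_iff_mulVec_eq_zero {K m n : Type*} [Field K] [Fintype n]
    (A : Matrix m n K) : A.rank = Fintype.card n ↔ ∀ v, A *ᵥ v = 0 → v = 0 := by
  rw [← ker_mulVecLin_eq_bot_iff, ← Submodule.finrank_eq_zero, rank]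
  have := A.mulVecLin.finrank_range_add_finrank_ker
  rw [Module.finrank_fintype_fun_eq_card] at this
  omega

namespace SignType

variable {ι R : Type*} [Fintype ι] [Ring R] [LinearOrder R] [IsStrictOrderedRing R]

/-- The formal sum `∑ j, s j` is not null over the sign hyperfield. -/
def IsDefinite (s : ι → SignType) : Prop :=
  (∃ j, s j ≠ 0) ∧ ∀ j₁ j₂, s j₁ ≠ 0 → s j₂ ≠ 0 → s j₁ = s j₂

@[simp]
theorem sign_coe (s : SignType) : sign (s : R) = s := by
  cases s <;> simp

theorem sum_ne_zero_of_isDefinite (w : ι → R) (hw : IsDefinite fun j ↦ sign (w j)) :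
    ∑ j, w j ≠ 0 := by
  obtain ⟨⟨j₀, hj₀⟩, hsame⟩ : (∃ j, sign (w j) ≠ 0) ∧
      ∀ j₁ j₂, sign (w j₁) ≠ 0 → sign (w j₂) ≠ 0 → sign (w j₁) = sign (w j₂) := hw
  have habs : ∀ j, sign (w j₀) * w j = |w j| := fun j ↦ by
    by_cases hj : sign (w j) = 0
    · simp [sign_eq_zero_iff.1 hj]
    · rw [← hsame j j₀ hj hj₀, sign_mul_self]
  intro hsum
  have hzero : ∑ j, |w j| = 0 := by simp_rw [← habs, ← Finset.mul_sum, hsum, mul_zero]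
  rw [Finset.sum_eq_zero_iff_of_nonneg fun j _ ↦ abs_nonneg (w j)] at hzero
  exact hj₀ (by simpa using hzero j₀ (Finset.mem_univ j₀))

theorem exists_pos_sum_mul_eq_zero_of_not_isDefinite {s : ι → SignType} (hs : ¬IsDefinite s) :
    ∃ d : ι → R, (∀ j, 0 < d j) ∧ ∑ j, d j * s j = 0 := by
  classical
  set p := (Finset.univ.filter fun j ↦ s j = 1).card
  set q := (Finset.univ.filter fun j ↦ s j = -1).card
  have hpq : (∃ j, s j ≠ 0) → 0 < p ∧ 0 < q := fun hne ↦ by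
    obtain ⟨j₁, j₂, h₁, h₂, hne₁₂⟩ : ∃ j₁ j₂, s j₁ ≠ 0 ∧ s j₂ ≠ 0 ∧ s j₁ ≠ s j₂ := by
      simpa [IsDefinite, hne] using hs
    have hopp : ∀ a b : SignType, a ≠ 0 → b ≠ 0 → a ≠ b → a = 1 ∧ b = -1 ∨ a = -1 ∧ b = 1 := by
      decide
    simp only [p, q, Finset.card_pos, Finset.filter_nonempty_iff, Finset.mem_univ, true_and]
    rcases hopp _ _ h₁ h₂ hne₁₂ with ⟨h₁, h₂⟩ | ⟨h₁, h₂⟩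
    exacts [⟨⟨j₁, h₁⟩, ⟨j₂, h₂⟩⟩, ⟨⟨j₂, h₂⟩, ⟨j₁, h₁⟩⟩]
  -- `p` positive terms weighted by `q` balance `q` negative terms weighted by `p`
  refine ⟨fun j ↦ if s j = 1 then (q : R) else if s j = -1 then (p : R) else 1, fun j ↦ ?_, ?_⟩
  · cases h : s j
    · simp [h]
    · simpa [h] using (hpq ⟨j, by simp [h]⟩).1
    · simpa [h] using (hpq ⟨j, by simp [h]⟩).2
  · have hterm : ∀ j, (if s j = 1 then (q : R) else if s j = -1 then (p : R) else 1) * s j =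
        (if s j = 1 then (q : R) else 0) - (if s j = -1 then (p : R) else 0) := fun j ↦ by
      cases s j <;> simp
    simp only [hterm, Finset.sum_sub_distrib, Finset.sum_ite, Finset.sum_const, nsmul_eq_mul,
      mul_zero, add_zero]
    exact sub_eq_zero.2 (Nat.cast_comm _ _)

end SignType

/-- (Arav et al.) Every real matrix with sign pattern `χ` has full column rank `n` iff for
every nonzero sign vector `x` some row `χ i` of `χ` is not orthogonal to `x` over the sign
hyperfield: the products `χ i j * x j` are not all zero, and all their nonzero values are
equal. -/
theorem sign_pattern_full_column_rank_iff
    (m n : ℕ) (χ : Fin m → Fin n → SignType) :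
    (∀ A : Matrix (Fin m) (Fin n) ℝ,
        (∀ i j, SignType.sign (A i j) = χ i j) → A.rank = n) ↔
    ∀ x : Fin n → SignType, x ≠ 0 → ∃ i,
      (∃ j, χ i j * x j ≠ 0) ∧
      ∀ j₁ j₂, χ i j₁ * x j₁ ≠ 0 → χ i j₂ * x j₂ ≠ 0 →
        χ i j₁ * x j₁ = χ i j₂ * x j₂ := by
  have hrank_iff (A : Matrix (Fin m) (Fin n) ℝ) : A.rank = n ↔ ∀ v, A *ᵥ v = 0 → v = 0 := by
    simpa using A.rank_eq_card_iff_mulVec_eq_zero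
  simp_rw [hrank_iff]
  constructor
  · intro hrank x hx
    by_contra hnull
    rw [not_exists] at hnull
    choose d hd_pos hd_sum using fun i ↦ SignType.exists_pos_sum_mul_eq_zero_of_not_isDefinite
      (R := ℝ) (s := fun j ↦ χ i j * x j) (hnull i)
    have hker := hrank (fun i j ↦ d i j * χ i j)
      (fun i j ↦ by rw [sign_mul, sign_pos (hd_pos i j), one_mul, SignType.sign_coe])
      (fun j ↦ (x j : ℝ)) (funext fun i ↦ by simpa [mulVec, dotProduct, mul_assoc] using hd_sum i)
    exact hx (funext fun j ↦ by rw [← SignType.sign_coe (R := ℝ) (x j), congrFun hker j,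
      Pi.zero_apply, sign_zero, Pi.zero_apply])
  · intro hdef A hA v hv
    by_contra hv_ne
    obtain ⟨i, hi⟩ := hdef (fun j ↦ SignType.sign (v j)) fun h ↦
      hv_ne (funext fun j ↦ sign_eq_zero_iff.1 (congrFun h j))
    refine SignType.sum_ne_zero_of_isDefinite (fun j ↦ A i j * v j) ?_ (congrFun hv i)
    simpa only [SignType.IsDefinite, sign_mul, hA] using hi
end

section
/- Let K be a field with more than two elements and let χ : Fin n → Fin n → Prop be an n×n zero-nonzero pattern. Then every matrix A : Matrix (Fin n) (Fin n) K with zero-nonzero pattern χ (i.e., A i j ≠ 0 ↔ χ i j for all i, j) satisfies det A ≠ 0 if and only if there is no nonempty subset S ⊆ Fin n such that for every row i, the number of indices j ∈ S with χ i j is different from 1. -/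
/-!
The support of a kernel vector of a singular matrix with pattern `χ` is a nonempty set `S` of
columns, and no row meets `S` in exactly one nonzero position: that row would pair with the
vector to a single nonzero product. Conversely, if every row meets `S` in none or at least two
positions, then, as `K` has at least three elements, the entries of each row on `S` can be
chosen nonzero with sum zero, which puts the indicator vector of `S` in the kernel.
-/

open Finset Matrix

theorem Finset.exists_forall_ne_zero_sum_eq {G ι : Type*} [AddCommGroup G] [DecidableEq ι]
    (hG : 2 < Cardinal.mk G) {s : Finset ι} (hs : s.Nontrivial) (c : G) :
    ∃ f : ι → G, (∀ j, f j ≠ 0) ∧ ∑ j ∈ s, f j = c := by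
  induction s using Finset.induction_on generalizing c with
  | empty => simp at hs
  | insert a s ha ih =>
    have hG3 : 3 ≤ Cardinal.mk G := by exact_mod_cast Order.succ_le_of_lt hG
    obtain ⟨x, hx0, hxc⟩ := Cardinal.exists_ne_ne_of_three_le hG3 0 c
    obtain rfl | ⟨b, rfl⟩ | hs' :=
      s.eq_empty_or_nonempty.imp_right Nonempty.exists_eq_singleton_or_nontrivial
    · simp at hs
    · have hab : a ≠ b := by simpa using ha
      refine ⟨fun j => if j = a then x else c - x, fun j => ?_, by simp [sum_pair hab, hab.symm]⟩
      dsimp only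
      split_ifs
      exacts [hx0, sub_ne_zero.mpr hxc.symm]
    · obtain ⟨f, hf0, hf⟩ := ih hs' (c - x)
      refine ⟨Function.update f a x, fun j => ?_, ?_⟩
      · rcases eq_or_ne j a with rfl | hj
        · simpa using hx0
        · simpa [hj] using hf0 j
      · rw [sum_insert ha, sum_update_of_notMem ha, Function.update_self, hf, add_sub_cancel]

theorem exists_ne_zero_iff_and_sum_eq_zero {G ι : Type*} [AddCommGroup G] (hG : 2 < Cardinal.mk G)
    (p : ι → Prop) {S : Finset ι} (hS : {j | j ∈ S ∧ p j}.ncard ≠ 1) :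
    ∃ r : ι → G, (∀ j, r j ≠ 0 ↔ p j) ∧ ∑ j ∈ S, r j = 0 := by
  classical
  replace hS : (S.filter p).card ≠ 1 := by rwa [← Set.ncard_coe_finset, coe_filter]
  obtain ⟨f, hf0, hf⟩ : ∃ f : ι → G, (∀ j, f j ≠ 0) ∧ ∑ j ∈ S.filter p, f j = 0 := by
    obtain hS0 | hS2 := (S.filter p).eq_empty_or_nonempty.imp_right fun h =>
      one_lt_card_iff_nontrivial.mp (lt_of_le_of_ne h.card_pos hS.symm)
    · obtain ⟨x, hx⟩ := (Cardinal.two_le_iff' 0).mp hG.le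
      exact ⟨fun _ => x, fun _ => hx, by simp [hS0]⟩
    · exact exists_forall_ne_zero_sum_eq hG hS2 0
  refine ⟨fun j => if p j then f j else 0, fun j => ?_, by rwa [← sum_filter]⟩
  by_cases hj : p j <;> simp [hj, hf0]

theorem Matrix.ncard_support_inter_support_row_ne_one_of_mulVec_eq_zero {m n R : Type*}
    [Fintype n] [Semiring R] [NoZeroDivisors R] {A : Matrix m n R} {v : n → R}
    (hv : A *ᵥ v = 0) (i : m) : (Function.support v ∩ Function.support (A i)).ncard ≠ 1 := by
  intro h1
  obtain ⟨j₀, hj₀⟩ := Set.ncard_eq_one.mp h1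
  have hmem : ∀ j, v j ≠ 0 ∧ A i j ≠ 0 ↔ j = j₀ := fun j => Set.ext_iff.mp hj₀ j
  have hrow : ∑ j, A i j * v j = A i j₀ * v j₀ :=
    Fintype.sum_eq_single j₀ fun j hj => by
      by_contra h
      exact hj ((hmem j).mp ⟨right_ne_zero_of_mul h, left_ne_zero_of_mul h⟩)
  obtain ⟨hv₀, hA₀⟩ := (hmem j₀).mpr rfl
  exact mul_ne_zero hA₀ hv₀ (hrow ▸ congrFun hv i)

theorem exists_det_eq_zero_of_ncard_ne_one {K n : Type*} [Field K] [Fintype n] [DecidableEq n]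
    (hK : 2 < Cardinal.mk K) (χ : n → n → Prop) {S : Finset n} (hS : S.Nonempty)
    (hdep : ∀ i, {j | j ∈ S ∧ χ i j}.ncard ≠ 1) :
    ∃ A : Matrix n n K, (∀ i j, A i j ≠ 0 ↔ χ i j) ∧ A.det = 0 := by
  choose A hpat hsum using fun i => exists_ne_zero_iff_and_sum_eq_zero hK (χ i) (hdep i)
  refine ⟨Matrix.of A, hpat, exists_mulVec_eq_zero_iff.mp
    ⟨fun j => if j ∈ S then 1 else 0, fun h => ?_, funext fun i => ?_⟩⟩
  · obtain ⟨j, hj⟩ := hS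
    simpa [hj] using congrFun h j
  · simp [mulVec, dotProduct, hsum]

theorem exists_ncard_ne_one_of_det_eq_zero {K n : Type*} [Field K] [Fintype n] [DecidableEq n]
    {χ : n → n → Prop} {A : Matrix n n K} (hpat : ∀ i j, A i j ≠ 0 ↔ χ i j) (hdet : A.det = 0) :
    ∃ S : Finset n, S.Nonempty ∧ ∀ i, {j | j ∈ S ∧ χ i j}.ncard ≠ 1 := by
  classical
  obtain ⟨v, hv0, hv⟩ := exists_mulVec_eq_zero_iff.mpr hdet
  refine ⟨univ.filter (v · ≠ 0), ?_, fun i => ?_⟩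
  · obtain ⟨j, hj⟩ := Function.ne_iff.mp hv0
    exact ⟨j, by simpa using hj⟩
  · simpa [← hpat, Function.support, Set.inter_def] using
      ncard_support_inter_support_row_ne_one_of_mulVec_eq_zero hv i

/-- For a field `K` with more than two elements and a square zero-nonzero pattern `χ`, every
matrix over `K` with zero-nonzero pattern `χ` is nonsingular iff no nonempty set `S` of
columns of `χ` is linearly dependent over the Krasner hyperfield, i.e. iff there is no
nonempty `S` such that every row has a number of nonzero positions in `S` different from
one. -/
theorem zero_nonzero_pattern_nonsingular_iff
    (K : Type*) [Field K] (hK : 2 < Cardinal.mk K) (n : ℕ)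
    (χ : Fin n → Fin n → Prop) :
    (∀ A : Matrix (Fin n) (Fin n) K,
        (∀ i j, A i j ≠ 0 ↔ χ i j) → A.det ≠ 0) ↔
    ¬ ∃ S : Finset (Fin n), S.Nonempty ∧ ∀ i, {j | j ∈ S ∧ χ i j}.ncard ≠ 1 := by
  constructor
  · rintro hA ⟨S, hS, hdep⟩
    obtain ⟨A, hpat, hdet⟩ := exists_det_eq_zero_of_ncard_ne_one hK χ hS hdep
    exact hA A hpat hdet
  · rintro hno A hpat hdet
    exact hno (exists_ncard_ne_one_of_det_eq_zero hpat hdet)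
end

section
/- Let K be an infinite field, let W be a linear subspace of Fin n → K, and let S be a set of vectors in W. Then there exists a vector w ∈ W whose support equals the union of the supports of the elements of S, i.e., {i : w i ≠ 0} = ⋃_{v ∈ S} {i : v i ≠ 0}. -/
/-!
Over an infinite field a vector `w` can absorb the support of any other vector `v`: for all but
finitely many scalars `c`, the support of `w + c • v` is the union of the two supports. Hence a
subspace vector of maximal support contains the support of every vector of the subspace. Applied
to the vectors of `W` supported in the union `U` of the supports of `S`, this gives a vector whose
support is exactly `U`.
-/

open Function Set

section

variable {ι K : Type*} [Field K] [Finite ι] [Infinite K]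

lemma exists_support_add_smul_eq_union (w v : ι → K) :
    ∃ c : K, support (w + c • v) = support w ∪ support v := by
  obtain ⟨c, hc⟩ := (finite_range fun i => -w i / v i).exists_notMem
  refine ⟨c, Set.ext fun i => ?_⟩
  simp only [mem_support, mem_union, Pi.add_apply, Pi.smul_apply, smul_eq_mul]
  by_cases hv : v i = 0
  · simp [hv]
  · refine iff_of_true (fun hzero => hc ⟨i, ?_⟩) (Or.inr hv)
    field_simp
    linear_combination -hzero

theorem Submodule.exists_mem_forall_support_subset (W : Submodule K (ι → K)) :
    ∃ w ∈ W, ∀ v ∈ W, support v ⊆ support w := by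
  obtain ⟨w, hw, hmax⟩ :=
    Finite.exists_maximalFor' support (W : Set (ι → K)) (toFinite _) ⟨0, W.zero_mem⟩
  refine ⟨w, hw, fun v hv => ?_⟩
  obtain ⟨c, hc⟩ := exists_support_add_smul_eq_union w v
  have hle := hmax (W.add_mem hw (W.smul_mem c hv)) (hc ▸ subset_union_left)
  rw [hc] at hle
  exact subset_union_right.trans hle

end

/-- Over an infinite field, any subspace `W ≤ Kⁿ` contains a vector whose support is the
union of the supports of any given set `S` of vectors of `W` (the key content of the fact
that `K → 𝕂` is an epic homomorphism to the Krasner hyperfield). -/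
theorem exists_vector_support_eq_iUnion_supports
    (K : Type*) [Field K] [Infinite K] (n : ℕ)
    (W : Submodule K (Fin n → K)) (S : Set (Fin n → K)) (hS : ∀ v ∈ S, v ∈ W) :
    ∃ w ∈ W, {i | w i ≠ 0} = ⋃ v ∈ S, {i | v i ≠ 0} := by
  set U := ⋃ v ∈ S, {i | v i ≠ 0}
  obtain ⟨w, ⟨hwW, hwU⟩, hmax⟩ :=
    (W ⊓ Submodule.pi Uᶜ fun _ => ⊥).exists_mem_forall_support_subset
  refine ⟨w, hwW, subset_antisymm (fun i hi => ?_) (iUnion₂_subset fun v hv => ?_)⟩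
  · by_contra hiU
    exact hi (by simpa using hwU i hiU)
  · refine hmax v ⟨hS v hv, Submodule.mem_pi.2 fun i hiU => ?_⟩
    by_contra hi
    exact hiU (mem_biUnion hv hi)
end

section
/- Let M be a matroid on ground set Fin n of rank r, and let χ : Fin m → Fin n → Prop be a zero-nonzero pattern such that for every row index i, the zero set {j : ¬ χ i j} is a flat of M. Then for every subset S ⊆ Fin n with |S| = r + 1, there exists a nonempty subset S' ⊆ S such that for every row i, the number of indices j ∈ S' with χ i j is different from 1. -/
/-!
Since every independent set has at most `r` elements, the `r + 1` chosen columns are dependent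
and so contain a circuit `C`. Taking `S' = C` works: if some row `i` had exactly one nonzero
entry `e` in `C`, then `C \ {e}` would lie in the zero set of row `i`, which is a flat, so its
closure would too; but `e` lies in the closure of `C \ {e}`.
-/

/-- The rank of a matroid: the (common) cardinality of its bases. -/
noncomputable def Matroid.rankNat {α : Type*} (M : Matroid α) : ℕ :=
  sSup {k | ∃ B, M.IsBase B ∧ B.ncard = k}

namespace Matroid

variable {α : Type*} {M : Matroid α} {B C F I : Set α}

lemma IsBase.rankNat_eq_ncard (hB : M.IsBase B) : M.rankNat = B.ncard := by
  have hsingleton : {k | ∃ B', M.IsBase B' ∧ B'.ncard = k} = {B.ncard} := by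
    ext k
    exact ⟨fun ⟨B', hB', hk⟩ ↦ hk ▸ hB'.ncard_eq_ncard_of_isBase hB, fun hk ↦ ⟨B, hB, hk.symm⟩⟩
  rw [rankNat, hsingleton, csSup_singleton]

lemma Indep.ncard_le_rankNat [M.RankFinite] (hI : M.Indep I) : I.ncard ≤ M.rankNat := by
  obtain ⟨B, hB, hIB⟩ := hI.exists_isBase_superset
  rw [hB.rankNat_eq_ncard]
  exact Set.ncard_le_ncard hIB hB.finite

lemma IsCircuit.ncard_sdiff_isFlat_ne_one (hC : M.IsCircuit C) (hF : M.IsFlat F) :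
    (C \ F).ncard ≠ 1 := by
  intro hone
  obtain ⟨e, he⟩ := Set.ncard_eq_one.mp hone
  have heCF : e ∈ C \ F := he ▸ rfl
  have hCeF : C \ {e} ⊆ F := fun x ⟨hxC, hxe⟩ ↦ by
    by_contra hxF
    have hx : x ∈ C \ F := ⟨hxC, hxF⟩
    exact hxe (he ▸ hx)
  have heF : e ∈ F :=
    hF.closure ▸ M.closure_subset_closure hCeF (hC.mem_closure_sdiff_singleton_of_mem heCF.1)
  exact heCF.2 heF

end Matroid

/-- If the zero set of every row of a zero-nonzero pattern `χ` is a flat of a matroid `M` of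
rank `r` on the set of columns, then any `r + 1` columns of `χ` are linearly dependent over
the Krasner hyperfield: some nonempty subset `S'` of them is such that every row has a
number of nonzero positions in `S'` different from one. -/
theorem columns_dependent_over_krasner_of_flats
    (m n r : ℕ) (M : Matroid (Fin n)) (hE : M.E = Set.univ) (hr : M.rankNat = r)
    (χ : Fin m → Fin n → Prop) (hflat : ∀ i, M.IsFlat {j | ¬ χ i j}) :
    ∀ S : Finset (Fin n), S.card = r + 1 →
      ∃ S' : Finset (Fin n), S' ⊆ S ∧ S'.Nonempty ∧
        ∀ i, {j | j ∈ S' ∧ χ i j}.ncard ≠ 1 := by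
  intro S hS
  have hSdep : M.Dep S := by
    refine (M.not_indep_iff (by simp [hE])).mp fun hSind ↦ ?_
    have hcard := hSind.ncard_le_rankNat
    rw [Set.ncard_coe_finset, hS, hr] at hcard
    omega
  obtain ⟨C, hCS, hC⟩ := hSdep.exists_isCircuit_subset
  have hCfin : C.Finite := C.toFinite
  refine ⟨hCfin.toFinset, by simpa [← Finset.coe_subset] using hCS,
    by simpa using hC.nonempty, fun i ↦ ?_⟩
  have hrow : {j | j ∈ hCfin.toFinset ∧ χ i j} = C \ {j | ¬ χ i j} := by
    ext j
    simp
  rw [hrow]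
  exact hC.ncard_sdiff_isFlat_ne_one (hflat i)
end

section
/- For any vectors X, Y : Fin n → ℝ there exists ε > 0 such that for every index i, SignType.sign (X i + ε * Y i) equals SignType.sign (X i) if X i ≠ 0, and equals SignType.sign (Y i) if X i = 0. -/
open Filter Topology

theorem sign_mul_of_pos {α : Type*} [Ring α] [LinearOrder α] [IsStrictOrderedRing α] {ε : α}
    (hε : 0 < ε) (y : α) : SignType.sign (ε * y) = SignType.sign y := by
  rw [sign_mul, sign_pos hε, one_mul]

section

variable {𝕜 : Type*} [Field 𝕜] [LinearOrder 𝕜] [IsStrictOrderedRing 𝕜] [TopologicalSpace 𝕜]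
  [OrderTopology 𝕜]

theorem eventually_sign_add_mul_eq_sign {x : 𝕜} (hx : x ≠ 0) (y : 𝕜) :
    ∀ᶠ ε in 𝓝 0, SignType.sign (x + ε * y) = SignType.sign x := by
  have hline : Tendsto (fun ε : 𝕜 => x + ε * y) (𝓝 0) (𝓝 x) := by
    have hcont : Continuous fun ε : 𝕜 => x + ε * y := by fun_prop
    simpa using hcont.tendsto 0
  have hsign : Tendsto SignType.sign (𝓝 x) (pure (SignType.sign x)) := by
    rw [← nhds_discrete]
    exact continuousAt_sign_of_ne_zero hx
  exact tendsto_pure.1 (hsign.comp hline)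

theorem eventually_sign_add_mul_eq_conformal_composition {ι : Type*} [Finite ι]
    (X Y : ι → 𝕜) :
    ∀ᶠ ε in 𝓝[>] 0, ∀ i,
      (X i ≠ 0 → SignType.sign (X i + ε * Y i) = SignType.sign (X i)) ∧
      (X i = 0 → SignType.sign (X i + ε * Y i) = SignType.sign (Y i)) := by
  refine eventually_all.2 fun i => ?_
  by_cases hX : X i = 0
  · filter_upwards [self_mem_nhdsWithin] with ε (hε : 0 < ε)
    simp [hX, sign_mul_of_pos hε]
  · filter_upwards [nhdsWithin_le_nhds (eventually_sign_add_mul_eq_sign hX (Y i))] with ε hε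
    exact ⟨fun _ => hε, fun h => absurd h hX⟩

end

/-- For vectors `X, Y ∈ ℝⁿ` and all sufficiently small `ε > 0`, the sign vector of
`X + ε • Y` is the conformal composition of the sign vectors of `X` and `Y`. -/
theorem exists_eps_sign_add_eq_conformal_composition
    (n : ℕ) (X Y : Fin n → ℝ) :
    ∃ ε : ℝ, 0 < ε ∧ ∀ i,
      (X i ≠ 0 → SignType.sign (X i + ε * Y i) = SignType.sign (X i)) ∧
      (X i = 0 → SignType.sign (X i + ε * Y i) = SignType.sign (Y i)) :=
  ((eventually_sign_add_mul_eq_conformal_composition X Y).and self_mem_nhdsWithin).exists.imp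
    fun _ h => ⟨h.2, h.1⟩
end

section
/- Let W be a linear subspace of Fin n → ℝ and let x, y ∈ W. Then there exists z ∈ W such that for every index i, SignType.sign (z i) equals SignType.sign (x i) if x i ≠ 0, and equals SignType.sign (y i) if x i = 0. In other words, the set of sign vectors of elements of W is closed under conformal composition. -/
/-! Take `z = c • x + y` with `c` large: on the support of `x` the term `c • x` dominates `y`,
and off it `z` agrees with `y`. Only finitely many coordinates constrain `c`. -/

open Filter

section

variable {K : Type*} [Field K] [LinearOrder K] [IsStrictOrderedRing K]

theorem sign_add_eq_sign_of_abs_lt {a b : K} (h : |b| < |a|) :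
    SignType.sign (a + b) = SignType.sign a := by
  rcases lt_trichotomy a 0 with ha | rfl | ha
  · rw [abs_of_neg ha] at h
    rw [sign_neg ha, sign_neg (by linarith [le_abs_self b])]
  · exact absurd h (by simp)
  · rw [abs_of_pos ha] at h
    rw [sign_pos ha, sign_pos (by linarith [neg_abs_le b])]

theorem eventually_sign_mul_add_eq {a : K} (ha : a ≠ 0) (b : K) :
    ∀ᶠ c in atTop, SignType.sign (c * a + b) = SignType.sign a := by
  filter_upwards [eventually_gt_atTop (|b| / |a|), eventually_gt_atTop 0] with c hbc hc
  have hb : |b| < |c * a| := by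
    rwa [abs_mul, abs_of_pos hc, ← div_lt_iff₀ (abs_pos.2 ha)]
  rw [sign_add_eq_sign_of_abs_lt hb, sign_mul, sign_pos hc, one_mul]

theorem eventually_sign_smul_add_eq {ι : Type*} [Finite ι] (x y : ι → K) :
    ∀ᶠ c : K in atTop, ∀ i, x i ≠ 0 → SignType.sign ((c • x + y) i) = SignType.sign (x i) :=
  eventually_all.2 fun i => by
    by_cases hx : x i = 0
    · exact .of_forall fun _ h => absurd hx h
    · simpa [hx] using eventually_sign_mul_add_eq hx (y i)

end

/-- The set of sign vectors of elements of a linear subspace `W ≤ ℝⁿ` is closed under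
conformal composition: for `x, y ∈ W` there is `z ∈ W` whose sign vector is
`sign x ∘ sign y` (key step in showing `sign : ℝ → 𝕊` is epic). -/
theorem exists_mem_sign_eq_conformal_composition
    (n : ℕ) (W : Submodule ℝ (Fin n → ℝ)) (x y : Fin n → ℝ)
    (hx : x ∈ W) (hy : y ∈ W) :
    ∃ z ∈ W, ∀ i,
      (x i ≠ 0 → SignType.sign (z i) = SignType.sign (x i)) ∧
      (x i = 0 → SignType.sign (z i) = SignType.sign (y i)) := by
  obtain ⟨c, hc⟩ := (eventually_sign_smul_add_eq x y).exists
  exact ⟨c • x + y, W.add_mem (W.smul_mem c hx) hy, fun i => ⟨hc i, fun h => by simp [h]⟩⟩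
end

section
/- Let K be an infinite field and let X, Y : Fin n → LaurentSeries K be vectors of formal Laurent series. Then there exists a nonzero a ∈ K such that for every index i with X i and Y i not both zero, the series X i + a • Y i is nonzero and its order equals the minimum of the orders of the nonzero series among X i and Y i (i.e., it equals min((X i).order, (Y i).order) when both are nonzero, (X i).order when Y i = 0, and (Y i).order when X i = 0). -/
/-!
Since `x + a • y` has all coefficients below `e = min (ord x) (ord y)` equal to zero, its order
is `e` unless `a` cancels the coefficients at `e`, i.e. `x_e + a y_e = 0`; over a domain at most
one `a` does so. Hence only finitely many scalars are bad for some index, and an infinite field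
has a nonzero scalar avoiding all of them. The argument is run with `orderTop` (which is `⊤` at
`0`, unlike `order`, which is a junk `0` there), so that the minimum needs no case split.
-/

namespace HahnSeries

variable {Γ R : Type*} [LinearOrder Γ]

theorem order_eq_order_of_orderTop_eq [Zero Γ] [Zero R] {x y : R⟦Γ⟧}
    (h : x.orderTop = y.orderTop) : x.order = y.order := by
  obtain rfl | hx := eq_or_ne x 0
  · rw [orderTop_zero, eq_comm, orderTop_eq_top] at h
    rw [h]
  · have hy : y ≠ 0 := by rwa [← orderTop_ne_top, ← h, orderTop_ne_top]
    rw [← WithTop.coe_inj, order_eq_orderTop_of_ne_zero hx, order_eq_orderTop_of_ne_zero hy, h]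

theorem order_eq_min_of_orderTop_eq_min [Zero Γ] [Zero R] {x y z : R⟦Γ⟧} (hx : x ≠ 0)
    (hy : y ≠ 0) (h : z.orderTop = min x.orderTop y.orderTop) :
    z.order = min x.order y.order := by
  rw [← order_eq_orderTop_of_ne_zero hx, ← order_eq_orderTop_of_ne_zero hy, ← WithTop.coe_min]
    at h
  have hz : z ≠ 0 := orderTop_ne_top.1 (h ▸ WithTop.coe_ne_top)
  rw [← WithTop.coe_inj, order_eq_orderTop_of_ne_zero hz, h]

theorem coeff_add_smul_eq_zero_of_orderTop_ne_min [Semiring R] {x y : R⟦Γ⟧} {a : R} {e : Γ}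
    (he : min x.orderTop y.orderTop = e)
    (ha : (x + a • y).orderTop ≠ min x.orderTop y.orderTop) :
    x.coeff e + a * y.coeff e = 0 := by
  by_contra hc
  refine ha (le_antisymm (he ▸ orderTop_le_of_coeff_ne_zero (by simpa using hc))
    (le_orderTop_iff_forall.2 fun j hj => ?_))
  simp [coeff_eq_zero_of_lt_orderTop (hj.trans_le (min_le_left _ _)),
    coeff_eq_zero_of_lt_orderTop (hj.trans_le (min_le_right _ _))]

theorem subsingleton_setOf_orderTop_add_smul_ne_min [Ring R] [IsDomain R] (x y : R⟦Γ⟧) :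
    {a : R | (x + a • y).orderTop ≠ min x.orderTop y.orderTop}.Subsingleton := by
  intro a ha b hb
  obtain ⟨e, he⟩ : ∃ e : Γ, min x.orderTop y.orderTop = e := by
    refine WithTop.ne_top_iff_exists.1 (fun htop => ha ?_) |>.imp fun _ => Eq.symm
    simp only [min_eq_top, orderTop_eq_top] at htop
    simp [htop]
  have hxa := coeff_add_smul_eq_zero_of_orderTop_ne_min he ha
  have hxb := coeff_add_smul_eq_zero_of_orderTop_ne_min he hb
  have hy : y.coeff e ≠ 0 := by
    intro hy0
    rw [hy0, mul_zero, add_zero] at hxa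
    rcases min_choice x.orderTop y.orderTop with h | h <;> rw [h] at he
    · exact coeff_orderTop_ne he hxa
    · exact coeff_orderTop_ne he hy0
  exact mul_right_cancel₀ hy (add_left_cancel (hxa.trans hxb.symm))

end HahnSeries

/-- Given vectors `X, Y` of formal Laurent series over an infinite field `K`, there is a
nonzero scalar `a ∈ K` such that entrywise the order of `X i + a • Y i` is the minimum of
the orders of `X i` and `Y i` (key step in showing that the valuation map to the tropical
hyperfield is epic). -/
theorem exists_scalar_order_add_smul_eq_min
    (K : Type*) [Field K] [Infinite K] (n : ℕ) (X Y : Fin n → LaurentSeries K) :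
    ∃ a : K, a ≠ 0 ∧ ∀ i, (X i ≠ 0 ∨ Y i ≠ 0) →
      (X i + a • Y i ≠ 0 ∧
        (X i ≠ 0 → Y i ≠ 0 → (X i + a • Y i).order = min (X i).order (Y i).order) ∧
        (Y i = 0 → (X i + a • Y i).order = (X i).order) ∧
        (X i = 0 → (X i + a • Y i).order = (Y i).order)) := by
  let bad : Set K :=
    {0} ∪ ⋃ i, {a | (X i + a • Y i).orderTop ≠ min (X i).orderTop (Y i).orderTop}
  have hbad : bad.Finite := (Set.finite_singleton 0).union <| Set.finite_iUnion fun i =>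
    (HahnSeries.subsingleton_setOf_orderTop_add_smul_ne_min (X i) (Y i)).finite
  obtain ⟨a, ha⟩ := hbad.infinite_compl.nonempty
  simp only [bad, Set.mem_compl_iff, Set.mem_union, Set.mem_singleton_iff, Set.mem_iUnion,
    Set.mem_ofPred_eq, not_or, not_exists, not_not] at ha
  obtain ⟨ha0, hmin⟩ := ha
  refine ⟨a, ha0, fun i hXY => ⟨?_, fun hX hY => ?_, fun hY => by simp [hY], fun hX => ?_⟩⟩
  · rwa [← HahnSeries.orderTop_ne_top, hmin i, ne_eq, min_eq_top, HahnSeries.orderTop_eq_top,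
      HahnSeries.orderTop_eq_top, not_and_or]
  · exact HahnSeries.order_eq_min_of_orderTop_eq_min hX hY (hmin i)
  · exact HahnSeries.order_eq_order_of_orderTop_eq (by simpa [hX] using hmin i)
end
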